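/- arXiv:1607.07933 — 3 statements merged into one kernel-verified Lean document; each statement's English description precedes it below -/
import Mathlib

section
/- Let ρ and ξ be random variables with 0 ≤ ρ ≤ 1, P(ρ > 0) > 0, and 1 ≤ ξ ≤ M for some M > 1. Set λ_c = 1 / (E[ρ]·E[1/ξ]). If λ > λ_c, then the equation E[λ·E[ρ] / (ξ + λ·x·E[ρ])] = 1 has a unique solution x* in (0, ∞). If λ < λ_c, this equation has no solution in (0, ∞). -/
open MeasureTheory Set

/-!
With `c = λ E[ρ]`, the left-hand side is `h(x) = E[c / (ξ + c x)]`, which on `[0, ∞)` is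
continuous (dominated convergence, the integrand being at most `c` since `ξ ≥ 1`) and strictly
decreasing, with `h(0) = λ/λ_c` and `h(1) ≤ c / (1 + c) < 1`. If `λ > λ_c` the intermediate value
theorem gives a root of `h = 1` in `(0, 1]`, unique by strict monotonicity; if `λ < λ_c` then
`h(x) < h(0) < 1` for every `x > 0`.
-/

theorem StrictAntiOn.existsUnique_Ioi_eq {f : ℝ → ℝ} {a b y : ℝ} (hf : StrictAntiOn f (Ici a))
    (hfc : ContinuousOn f (Ici a)) (hab : a ≤ b) (ha : y < f a) (hb : f b ≤ y) :
    ∃! x, x ∈ Ioi a ∧ f x = y := by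
  obtain ⟨x, hx, hfx⟩ := intermediate_value_Icc' hab (hfc.mono Icc_subset_Ici_self) ⟨hb, ha.le⟩
  have hax : a < x := hx.1.lt_of_ne fun hxa => ha.ne' (hxa ▸ hfx)
  refine ⟨x, ⟨hax, hfx⟩, fun z ⟨hz, hfz⟩ => ?_⟩
  exact hf.injOn (mem_Ici.2 hz.le) (mem_Ici.2 hx.1) (hfz.trans hfx.symm)

theorem MeasureTheory.integral_lt_integral_of_forall_lt {Ω : Type*} [MeasurableSpace Ω]
    {μ : Measure Ω} [NeZero μ] {f g : Ω → ℝ} (hf : Integrable f μ) (hg : Integrable g μ)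
    (hlt : ∀ ω, f ω < g ω) : ∫ ω, f ω ∂μ < ∫ ω, g ω ∂μ := by
  have hsupp : Function.support (fun ω => g ω - f ω) = univ :=
    eq_univ_of_forall fun ω => sub_ne_zero.2 (hlt ω).ne'
  have hpos : 0 < ∫ ω, g ω - f ω ∂μ := by
    rw [integral_pos_iff_support_of_nonneg (fun ω => sub_nonneg.2 (hlt ω).le) (hg.sub hf),
      hsupp, Measure.measure_univ_pos]
    exact NeZero.ne μ
  rw [integral_sub hg hf] at hpos
  linarith

theorem norm_div_add_mul_le {a c x : ℝ} (ha : 1 ≤ a) (hc : 0 ≤ c) (hx : 0 ≤ x) :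
    ‖c / (a + c * x)‖ ≤ c := by
  have hden : 1 ≤ a + c * x := by nlinarith [mul_nonneg hc hx]
  rw [Real.norm_of_nonneg (div_nonneg hc (by linarith))]
  exact div_le_self hc hden

theorem MeasureTheory.Integrable.of_nonneg_of_le {α : Type*} [MeasurableSpace α] {μ : Measure α}
    [IsFiniteMeasure μ] {f : α → ℝ} (hf : AEStronglyMeasurable f μ) {C : ℝ} (h0 : ∀ x, 0 ≤ f x)
    (hC : ∀ x, f x ≤ C) : Integrable f μ :=
  .of_bound hf C (.of_forall fun x => (Real.norm_of_nonneg (h0 x)).trans_le (hC x))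

theorem MeasureTheory.integral_pos_of_nonneg_of_le {α : Type*} [MeasurableSpace α]
    {μ : Measure α} [IsFiniteMeasure μ] {f : α → ℝ} (hf : AEStronglyMeasurable f μ) {C : ℝ}
    (h0 : ∀ x, 0 ≤ f x) (hC : ∀ x, f x ≤ C) (hpos : 0 < μ {x | 0 < f x}) : 0 < ∫ x, f x ∂μ :=
  (integral_pos_iff_support_of_nonneg h0 (.of_nonneg_of_le hf h0 hC)).2
    (hpos.trans_le (measure_mono fun _ hx => ne_of_gt hx))

noncomputable def scaledInvMean {Ω : Type*} [MeasurableSpace Ω] (ℙ : Measure Ω) (ξ : Ω → ℝ)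
    (c x : ℝ) : ℝ :=
  ∫ ω, c / (ξ ω + c * x) ∂ℙ

section scaledInvMean

variable {Ω : Type*} [MeasurableSpace Ω] {ℙ : Measure Ω} {ξ : Ω → ℝ} {c : ℝ}

theorem scaledInvMean_zero : scaledInvMean ℙ ξ c 0 = c * ∫ ω, 1 / ξ ω ∂ℙ := by
  simp only [scaledInvMean, mul_zero, add_zero, ← integral_const_mul, mul_one_div]

theorem integral_one_div_pos [IsFiniteMeasure ℙ] [NeZero ℙ] (hξm : Measurable ξ)
    (hξ : ∀ ω, 1 ≤ ξ ω) : 0 < ∫ ω, 1 / ξ ω ∂ℙ := by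
  have hξpos (ω : Ω) : 0 < ξ ω := zero_lt_one.trans_le (hξ ω)
  refine integral_pos_of_nonneg_of_le (measurable_const.div hξm).aestronglyMeasurable
    (fun ω => (one_div_pos.2 (hξpos ω)).le) (fun ω => div_le_one_of_le₀ (hξ ω) (hξpos ω).le) ?_
  simp only [one_div_pos, hξpos, ofPred_true, Measure.measure_univ_pos]
  exact NeZero.ne ℙ

theorem integrable_div_add_mul [IsFiniteMeasure ℙ] (hξm : Measurable ξ) (hξ : ∀ ω, 1 ≤ ξ ω)
    {x : ℝ} (hc : 0 ≤ c) (hx : 0 ≤ x) : Integrable (fun ω => c / (ξ ω + c * x)) ℙ :=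
  .of_bound (measurable_const.div (hξm.add_const _)).aestronglyMeasurable c
    (.of_forall fun ω => norm_div_add_mul_le (hξ ω) hc hx)

theorem scaledInvMean_strictAntiOn [IsFiniteMeasure ℙ] [NeZero ℙ] (hξm : Measurable ξ)
    (hξ : ∀ ω, 1 ≤ ξ ω) (hc : 0 < c) : StrictAntiOn (scaledInvMean ℙ ξ c) (Ici 0) := by
  intro x (hx : 0 ≤ x) y hy hxy
  refine integral_lt_integral_of_forall_lt (integrable_div_add_mul hξm hξ hc.le hy)
    (integrable_div_add_mul hξm hξ hc.le hx) fun ω => ?_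
  exact div_lt_div_of_pos_left hc (by nlinarith [hξ ω, mul_nonneg hc.le hx]) (by nlinarith)

theorem continuousOn_scaledInvMean [IsFiniteMeasure ℙ] (hξm : Measurable ξ)
    (hξ : ∀ ω, 1 ≤ ξ ω) (hc : 0 ≤ c) : ContinuousOn (scaledInvMean ℙ ξ c) (Ici 0) := by
  refine continuousOn_of_dominated
    (fun x hx => (integrable_div_add_mul hξm hξ hc hx).aestronglyMeasurable)
    (fun x hx => .of_forall fun ω => norm_div_add_mul_le (hξ ω) hc hx) (integrable_const c)
    (.of_forall fun ω => continuousOn_const.div (by fun_prop) fun x (hx : 0 ≤ x) => ?_)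
  nlinarith [hξ ω, mul_nonneg hc hx]

theorem scaledInvMean_le [IsProbabilityMeasure ℙ] (hξm : Measurable ξ) (hξ : ∀ ω, 1 ≤ ξ ω)
    {x : ℝ} (hc : 0 ≤ c) (hx : 0 ≤ x) : scaledInvMean ℙ ξ c x ≤ c / (1 + c * x) := by
  have hle (ω : Ω) : c / (ξ ω + c * x) ≤ c / (1 + c * x) :=
    div_le_div_of_nonneg_left hc (by nlinarith [mul_nonneg hc hx]) (by linarith [hξ ω])
  simpa [scaledInvMean] using
    integral_mono (integrable_div_add_mul (ℙ := ℙ) hξm hξ hc hx) (integrable_const _) hle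

theorem scaledInvMean_one_le_one [IsProbabilityMeasure ℙ] (hξm : Measurable ξ)
    (hξ : ∀ ω, 1 ≤ ξ ω) (hc : 0 ≤ c) : scaledInvMean ℙ ξ c 1 ≤ 1 :=
  calc scaledInvMean ℙ ξ c 1 ≤ c / (1 + c * 1) := scaledInvMean_le hξm hξ hc zero_le_one
    _ ≤ 1 := by rw [mul_one, div_le_one (by positivity)]; linarith

end scaledInvMean

theorem stmt_1_general
    {Ω : Type*} [MeasurableSpace Ω] (ℙ : Measure Ω) [IsProbabilityMeasure ℙ]
    (ρ ξ : Ω → ℝ) (hρm : Measurable ρ) (hξm : Measurable ξ)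
    (hρ : ∀ ω, 0 ≤ ρ ω ∧ ρ ω ≤ 1) (hρpos : 0 < ℙ {ω | 0 < ρ ω})
    (M : ℝ) (hξ : ∀ ω, 1 ≤ ξ ω ∧ ξ ω ≤ M)
    (lam lamc : ℝ) (hlam : 0 < lam)
    (hlamc : lamc = 1 / ((∫ ω', ρ ω' ∂ℙ) * ∫ ω, 1 / ξ ω ∂ℙ)) :
    (lam > lamc →
      ∃! x : ℝ, x ∈ Ioi (0 : ℝ) ∧
        (∫ ω, lam * (∫ ω', ρ ω' ∂ℙ) / (ξ ω + lam * x * (∫ ω', ρ ω' ∂ℙ)) ∂ℙ) = 1) ∧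
    (lam < lamc →
      ∀ x : ℝ, x ∈ Ioi (0 : ℝ) →
        (∫ ω, lam * (∫ ω', ρ ω' ∂ℙ) / (ξ ω + lam * x * (∫ ω', ρ ω' ∂ℙ)) ∂ℙ) ≠ 1) := by
  set E := ∫ ω', ρ ω' ∂ℙ
  set I := ∫ ω, 1 / ξ ω ∂ℙ
  have hξ1 (ω : Ω) : 1 ≤ ξ ω := (hξ ω).1
  have hE : 0 < E := integral_pos_of_nonneg_of_le hρm.aestronglyMeasurable (fun ω => (hρ ω).1)
    (fun ω => (hρ ω).2) hρpos
  have hI : 0 < I := integral_one_div_pos hξm hξ1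
  have hc : 0 < lam * E := mul_pos hlam hE
  have hlamc_lt : lamc < lam ↔ 1 < scaledInvMean ℙ ξ (lam * E) 0 := by
    rw [hlamc, scaledInvMean_zero, div_lt_iff₀ (mul_pos hE hI), mul_assoc]
  have hlt_lamc : lam < lamc ↔ scaledInvMean ℙ ξ (lam * E) 0 < 1 := by
    rw [hlamc, scaledInvMean_zero, lt_div_iff₀ (mul_pos hE hI), mul_assoc]
  have hrw (x : ℝ) : ∫ ω, lam * E / (ξ ω + lam * x * E) ∂ℙ = scaledInvMean ℙ ξ (lam * E) x := by
    simp only [scaledInvMean, mul_right_comm lam x E]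
  have hanti : StrictAntiOn (scaledInvMean ℙ ξ (lam * E)) (Ici 0) :=
    scaledInvMean_strictAntiOn hξm hξ1 hc
  simp only [hrw]
  refine ⟨fun hgt => hanti.existsUnique_Ioi_eq (continuousOn_scaledInvMean hξm hξ1 hc.le)
    zero_le_one (hlamc_lt.1 hgt) ?_, fun hlt x hx => ?_⟩
  · exact scaledInvMean_one_le_one hξm hξ1 hc.le
  · exact ((hanti self_mem_Ici (Ioi_subset_Ici_self hx) hx).trans (hlt_lamc.1 hlt)).ne

/-- If `λ > λ_c = 1/(E[ρ]·E[1/ξ])` the equation `E[λE[ρ]/(ξ+λxE[ρ])] = 1` has a unique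
positive solution; if `λ < λ_c` it has none. -/
theorem stmt_1
    {Ω : Type*} [MeasurableSpace Ω] (ℙ : Measure Ω) [IsProbabilityMeasure ℙ]
    (ρ ξ : Ω → ℝ) (hρm : Measurable ρ) (hξm : Measurable ξ)
    (hρ : ∀ ω, 0 ≤ ρ ω ∧ ρ ω ≤ 1) (hρpos : 0 < ℙ {ω | 0 < ρ ω})
    (M : ℝ) (hM : 1 < M) (hξ : ∀ ω, 1 ≤ ξ ω ∧ ξ ω ≤ M)
    (lam lamc : ℝ) (hlam : 0 < lam)
    (hlamc : lamc = 1 / ((∫ ω', ρ ω' ∂ℙ) * ∫ ω, 1 / ξ ω ∂ℙ)) :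
    (lam > lamc →
      ∃! x : ℝ, x ∈ Ioi (0 : ℝ) ∧
        (∫ ω, lam * (∫ ω', ρ ω' ∂ℙ) / (ξ ω + lam * x * (∫ ω', ρ ω' ∂ℙ)) ∂ℙ) = 1) ∧
    (lam < lamc →
      ∀ x : ℝ, x ∈ Ioi (0 : ℝ) →
        (∫ ω, lam * (∫ ω', ρ ω' ∂ℙ) / (ξ ω + lam * x * (∫ ω', ρ ω' ∂ℙ)) ∂ℙ) ≠ 1) :=
  stmt_1_general ℙ ρ ξ hρm hξm hρ hρpos M hξ lam lamc hlam hlamc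
end

section
/- Let (S_l)_{l≥0} be the simple random walk on the complete graph C_n started at vertex 1 (each step moves to a uniformly chosen vertex different from the current one), and let R_m = |{S_0, S_1, ..., S_{m-1}}| be the number of distinct vertices visited in the first m steps. Then for any φ ∈ (0,1) and any constants 0 < C₁ < C₃, lim_{n→∞} sup_{C₁ log n ≤ m ≤ C₃ log n} | (E[φ^{R_m}])^{1/m} − φ | = 0. -/
open scoped NNReal
open MeasureTheory Filter Set Real Finset ENNReal

namespace Stmt8Aux

variable {m : ℕ}

/-- `i` is a repeat index of `f`. -/
def Rep (f : Fin m → ℕ) (i : Fin m) : Prop := ∃ j : Fin m, j.val < i.val ∧ f j = f i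

instance (f : Fin m → ℕ) : DecidablePred (Rep f) := fun _ => Fintype.decidableExistsFintype

lemma rep_nonempty (f : Fin m → ℕ) (i : Fin m) (h : Rep f i) :
    (Finset.univ.filter (fun j : Fin m => j.val < i.val ∧ f j = f i)).Nonempty := by
  obtain ⟨j, hj1, hj2⟩ := h
  exact ⟨j, Finset.mem_filter.mpr ⟨Finset.mem_univ j, hj1, hj2⟩⟩

/-- pointer to an earlier occurrence. -/
def ptr (f : Fin m → ℕ) (i : Fin m) (h : Rep f i) : Fin m :=
  (Finset.univ.filter (fun j : Fin m => j.val < i.val ∧ f j = f i)).min' (rep_nonempty f i h)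

lemma ptr_spec (f : Fin m → ℕ) (i : Fin m) (h : Rep f i) :
    (ptr f i h).val < i.val ∧ f (ptr f i h) = f i := by
  have h2 := Finset.min'_mem (Finset.univ.filter (fun j : Fin m => j.val < i.val ∧ f j = f i))
    (rep_nonempty f i h)
  rw [Finset.mem_filter] at h2
  exact ⟨h2.2.1, h2.2.2⟩

/-- encoding of a path recording repeats. -/
def Phi (f : Fin m → ℕ) (i : Fin m) : ℕ × ℕ :=
  if h : Rep f i then (1, (ptr f i h).val) else (0, f i)

lemma Phi_injective : Function.Injective (Phi (m := m)) := by
  intro f g hfg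
  have H : ∀ N, ∀ i : Fin m, i.val < N → f i = g i := by
    intro N
    induction N with
    | zero => intro i hi; omega
    | succ N ih =>
      intro i hi
      have h2 : Phi f i = Phi g i := congrFun hfg i
      by_cases h : Rep f i
      · have h' : Rep g i := by
          by_contra h'
          simp [Phi, h, h'] at h2
        simp only [Phi, dif_pos h, dif_pos h', Prod.mk.injEq] at h2
        have hptr : ptr f i h = ptr g i h' := Fin.ext h2.2
        have e1 := ptr_spec f i h
        have e2 := ptr_spec g i h'
        have hlt : (ptr f i h).val < N := by omega
        rw [← e1.2, ← e2.2, ← hptr]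
        exact ih _ hlt
      · have h' : ¬ Rep g i := by
          intro h'
          simp [Phi, h, h'] at h2
        simp only [Phi, dif_neg h, dif_neg h', Prod.mk.injEq] at h2
        exact h2.2
  funext i
  exact H m i i.isLt

lemma card_not_rep_le (f : Fin m → ℕ) :
    (Finset.univ.filter (fun i => ¬ Rep f i)).card ≤ (Finset.univ.image f).card := by
  apply Finset.card_le_card_of_injOn f (fun a _ => Finset.mem_image_of_mem f (Finset.mem_univ a))
  intro i hi j hj hij
  simp only [coe_filter, Set.mem_setOf_eq] at hi hj
  by_contra hne
  rcases Ne.lt_or_gt (show i ≠ j from hne) with hlt | hlt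
  · exact hj.2 ⟨i, hlt, hij⟩
  · exact hi.2 ⟨j, hlt, hij.symm⟩

lemma rep_card_ge (f : Fin m → ℕ) {k : ℕ}
    (hbad : (Finset.univ.image f).card + k ≤ m) :
    k ≤ (Finset.univ.filter (fun i => Rep f i)).card := by
  have h1 : (Finset.univ.filter (fun i => Rep f i)).card
      + (Finset.univ.filter (fun i => ¬ Rep f i)).card = m := by
    rw [Finset.card_filter_add_card_filter_not]
    simp
  have h2 := card_not_rep_le f
  omega

set_option maxHeartbeats 1000000 in
/-- Main counting bound: number of paths in `[0,n)^m` with at most `m-k` distinct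
values, times `(n/m)^k`, is at most `(2n)^m`. -/
lemma card_bad_le (m n k : ℕ) (hm : 1 ≤ m) (hx : 1 ≤ (n : ℝ) / m) :
    (((Fintype.piFinset (fun _ : Fin m => Finset.range n)).filter
        (fun f => (Finset.univ.image f).card + k ≤ m)).card : ℝ) * ((n : ℝ) / m) ^ k
      ≤ (2 * n) ^ m := by
  set x : ℝ := (n : ℝ) / m with hxdef
  have hx0 : (0:ℝ) ≤ x := le_trans zero_le_one hx
  set w : ℕ × ℕ → ℝ := fun v => if v.1 = 1 then x else 1 with hw
  have hw0 : ∀ v, 0 ≤ w v := by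
    intro v; simp only [hw]; split <;> [exact hx0; exact zero_le_one]
  set V : Finset (ℕ × ℕ) := ({0} ×ˢ Finset.range n) ∪ ({1} ×ˢ Finset.range m) with hV
  set B := (Fintype.piFinset (fun _ : Fin m => Finset.range n)).filter
      (fun f => (Finset.univ.image f).card + k ≤ m) with hB
  have hones : ∀ f ∈ B, x ^ k ≤ ∏ i, w (Phi f i) := by
    intro f hf
    have hf' := Finset.mem_filter.mp hf
    have hrep := rep_card_ge f hf'.2
    have heq : ∏ i, w (Phi f i) = x ^ (Finset.univ.filter (fun i => Rep f i)).card := by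
      have hwi : ∀ i : Fin m, w (Phi f i) = if Rep f i then x else 1 := by
        intro i
        by_cases h : Rep f i <;> simp [Phi, hw, h]
      rw [Finset.prod_congr rfl (fun i _ => hwi i), Finset.prod_ite, Finset.prod_const,
        Finset.prod_const_one, mul_one]
    rw [heq]
    exact pow_le_pow_right₀ hx hrep
  have step1 : (B.card : ℝ) * x ^ k ≤ ∑ f ∈ B, ∏ i, w (Phi f i) := by
    have e : (B.card : ℝ) * x ^ k = ∑ _f ∈ B, x ^ k := by
      rw [Finset.sum_const, nsmul_eq_mul]
    rw [e]
    exact Finset.sum_le_sum hones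
  have step2 : ∑ f ∈ B, ∏ i, w (Phi f i) = ∑ h ∈ B.image Phi, ∏ i, w (h i) := by
    rw [Finset.sum_image (fun a _ b _ h => Phi_injective h)]
  have himg : B.image Phi ⊆ Fintype.piFinset (fun _ : Fin m => V) := by
    intro h hh
    obtain ⟨f, hf, rfl⟩ := Finset.mem_image.mp hh
    have hf' := (Finset.mem_filter.mp hf).1
    rw [Fintype.mem_piFinset]
    intro i
    by_cases hrep : Rep f i
    · have hlt := (ptr_spec f i hrep).1
      simp only [Phi, dif_pos hrep, hV, Finset.mem_union, Finset.mem_product,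
        Finset.mem_singleton, Finset.mem_range]
      right
      exact ⟨trivial, lt_trans hlt i.isLt⟩
    · have hfi := Fintype.mem_piFinset.mp hf' i
      simp only [Finset.mem_range] at hfi
      simp only [Phi, dif_neg hrep, hV, Finset.mem_union, Finset.mem_product,
        Finset.mem_singleton, Finset.mem_range]
      left
      exact ⟨trivial, hfi⟩
  have step3 : ∑ h ∈ B.image Phi, ∏ i, w (h i)
      ≤ ∑ h ∈ Fintype.piFinset (fun _ : Fin m => V), ∏ i, w (h i) :=
    Finset.sum_le_sum_of_subset_of_nonneg himg
      (fun h _ _ => Finset.prod_nonneg (fun i _ => hw0 _))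
  have step4 : ∑ h ∈ Fintype.piFinset (fun _ : Fin m => V), ∏ i, w (h i)
      = (∑ v ∈ V, w v) ^ m := by
    rw [← Finset.prod_univ_sum]
    simp
  have hdisj : Disjoint (({0} : Finset ℕ) ×ˢ Finset.range n) (({1} : Finset ℕ) ×ˢ Finset.range m) := by
    rw [Finset.disjoint_left]
    intro v hv hv'
    simp only [Finset.mem_product, Finset.mem_singleton] at hv hv'
    omega
  have step5 : ∑ v ∈ V, w v = 2 * n := by
    rw [hV, Finset.sum_union hdisj]
    have e1 : ∑ v ∈ (({0} : Finset ℕ) ×ˢ Finset.range n), w v = n := by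
      rw [Finset.sum_product]
      simp [hw]
    have e2 : ∑ v ∈ (({1} : Finset ℕ) ×ˢ Finset.range m), w v = m * x := by
      rw [Finset.sum_product]
      simp [hw, mul_comm]
    rw [e1, e2, hxdef]
    have hm0 : (m:ℝ) ≠ 0 := by positivity
    field_simp
    ring
  calc (B.card : ℝ) * x ^ k ≤ ∑ f ∈ B, ∏ i, w (Phi f i) := step1
    _ = ∑ h ∈ B.image Phi, ∏ i, w (h i) := step2
    _ ≤ ∑ h ∈ Fintype.piFinset (fun _ : Fin m => V), ∏ i, w (h i) := step3
    _ = (∑ v ∈ V, w v) ^ m := step4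
    _ = (2 * n) ^ m := by rw [step5]

end Stmt8Aux


namespace Stmt8Aux2

variable {Ω : Type*} [MeasurableSpace Ω]

/-- extension of a finite path to `ℕ`. -/
def fext (m : ℕ) (f : Fin m → ℕ) : ℕ → ℕ := fun i => if h : i < m then f ⟨i, h⟩ else 0

lemma key (μ : Measure Ω) [IsProbabilityMeasure μ] (T : ℕ → Ω → ℕ)
    (hTm : ∀ i, Measurable (T i))
    (n m k : ℕ) (hn : 2 ≤ n) (hm : 1 ≤ m) (hkm : k ≤ m)
    (hlaw : ∀ m' : ℕ, ∀ f : ℕ → ℕ,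
      μ {ω | ∀ i ≤ m', T i ω = f i} =
        if f 0 = 0 ∧ (∀ i ≤ m', f i < n) ∧ (∀ i < m', f (i + 1) ≠ f i)
        then (((n : ℝ≥0∞) - 1)⁻¹) ^ m' else 0)
    (φ : ℝ) (hφ0 : 0 < φ) (hφ1 : φ ≤ 1) :
    φ ^ m ≤ ∫ ω, φ ^ ((Finset.range m).image (fun i => T i ω)).card ∂μ ∧
    ∫ ω, φ ^ ((Finset.range m).image (fun i => T i ω)).card ∂μ
      ≤ φ ^ (m - k) +
        ((((Fintype.piFinset (fun _ : Fin m => Finset.range n)).filter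
          (fun f => (Finset.univ.image f).card + k ≤ m)).card : ℝ)
          * (((n : ℝ) - 1)⁻¹) ^ (m - 1)) := by
  set g : Ω → ℕ := fun ω => ((Finset.range m).image (fun i => T i ω)).card with hg_def
  set A : (Fin m → ℕ) → Set Ω := fun f => {ω | ∀ i ≤ m - 1, T i ω = fext m f i} with hA_def
  -- the image identification
  have himg : ∀ (ω : Ω) (f : Fin m → ℕ), (∀ i ≤ m - 1, T i ω = fext m f i) →
      (Finset.range m).image (fun i => T i ω) = Finset.univ.image f := by
    intro ω f hω
    ext v
    simp only [Finset.mem_image, Finset.mem_range, Finset.mem_univ, true_and]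
    constructor
    · rintro ⟨i, hi, rfl⟩
      refine ⟨⟨i, hi⟩, ?_⟩
      rw [hω i (by omega)]
      simp [fext, hi]
    · rintro ⟨j, rfl⟩
      refine ⟨j.val, j.isLt, ?_⟩
      rw [hω j.val (by omega)]
      simp [fext, j.isLt]
  have hAm : ∀ f, MeasurableSet (A f) := by
    intro f
    have : A f = ⋂ i ∈ Set.Iic (m - 1), (T i) ⁻¹' {fext m f i} := by
      ext ω
      simp [hA_def, Set.mem_iInter]
    rw [this]
    exact MeasurableSet.biInter (Set.to_countable _)
      (fun i _ => (hTm i) (measurableSet_singleton _))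
  have hcov : ∀ ω : Ω, ω ∈ A (fun i : Fin m => T i.val ω) := by
    intro ω i hi
    have hi' : i < m := by omega
    simp [hA_def, fext, hi']
  have hgA : ∀ (f : Fin m → ℕ), ∀ ω ∈ A f, g ω = (Finset.univ.image f).card := by
    intro f ω hω
    rw [hg_def]
    simp only
    rw [himg ω f hω]
  have hgvec : ∀ ω : Ω, g ω = (Finset.univ.image (fun i : Fin m => T i.val ω)).card :=
    fun ω => hgA _ ω (hcov ω)
  -- measurability of g
  have hg : Measurable g := by
    apply measurable_to_countable
    intro ω₀
    have : g ⁻¹' {g ω₀} =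
        ⋃ (f : {f : Fin m → ℕ // (Finset.univ.image f).card = g ω₀}), A f.val := by
      ext ω
      constructor
      · intro hω
        have hω' : g ω = g ω₀ := hω
        exact Set.mem_iUnion.mpr ⟨⟨fun i => T i.val ω, by rw [← hω', hgvec ω]⟩, hcov ω⟩
      · intro hω
        obtain ⟨f, hf⟩ := Set.mem_iUnion.mp hω
        have : g ω = (Finset.univ.image f.val).card := hgA f.val ω hf
        simp only [Set.mem_preimage, Set.mem_singleton_iff]
        rw [this, f.prop]
    rw [this]
    exact MeasurableSet.iUnion (fun f => hAm f.val)
  have hφg : Measurable fun ω => φ ^ g ω := by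
    exact (measurable_from_top (f := fun j : ℕ => φ ^ j)).comp hg
  have hInt : Integrable (fun ω => φ ^ g ω) μ := by
    apply Integrable.mono' (integrable_const (1:ℝ)) hφg.aestronglyMeasurable
    filter_upwards with ω
    rw [Real.norm_eq_abs, abs_of_nonneg (by positivity)]
    exact pow_le_one₀ hφ0.le hφ1
  have hcard_le : ∀ ω, g ω ≤ m := by
    intro ω
    exact (Finset.card_image_le).trans (by simp)
  constructor
  · -- lower bound
    have e : ∫ _ω, (φ ^ m) ∂μ = φ ^ m := by
      rw [integral_const]
      simp [measure_univ]
    rw [← e]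
    apply integral_mono (integrable_const _) hInt
    intro ω
    exact pow_le_pow_of_le_one hφ0.le hφ1 (hcard_le ω)
  · -- upper bound
    set Bad : Set Ω := {ω | g ω + k ≤ m} with hBad_def
    have hBadM : MeasurableSet Bad := by
      have : Bad = g ⁻¹' {j | j + k ≤ m} := rfl
      rw [this]
      exact hg (by trivial)
    have hpt : ∀ ω, φ ^ g ω ≤ φ ^ (m - k) + Bad.indicator (fun _ => (1:ℝ)) ω := by
      intro ω
      by_cases hb : ω ∈ Bad
      · rw [Set.indicator_of_mem hb]
        have h1 : φ ^ g ω ≤ 1 := pow_le_one₀ hφ0.le hφ1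
        have h2 : (0:ℝ) ≤ φ ^ (m - k) := by positivity
        linarith
      · rw [Set.indicator_of_notMem hb, add_zero]
        apply pow_le_pow_of_le_one hφ0.le hφ1
        have : ¬ (g ω + k ≤ m) := hb
        omega
    have hIntInd : Integrable (fun ω => φ ^ (m - k) + Bad.indicator (fun _ => (1:ℝ)) ω) μ :=
      (integrable_const _).add ((integrable_const (1:ℝ)).indicator hBadM)
    have hstep : ∫ ω, φ ^ g ω ∂μ ≤ φ ^ (m - k) + (μ Bad).toReal := by
      have e : ∫ ω, (φ ^ (m - k) + Bad.indicator (fun _ => (1:ℝ)) ω) ∂μ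
          = φ ^ (m - k) + (μ Bad).toReal := by
        rw [integral_add (integrable_const _) ((integrable_const (1:ℝ)).indicator hBadM),
          integral_const, integral_indicator_const _ hBadM]
        simp [measure_univ]; rfl
      rw [← e]
      exact integral_mono hInt hIntInd hpt
    -- bound the measure of Bad
    set badF := (Fintype.piFinset (fun _ : Fin m => Finset.range n)).filter
      (fun f => (Finset.univ.image f).card + k ≤ m) with hbadF_def
    set c : ℝ≥0∞ := (((n : ℝ≥0∞) - 1)⁻¹) ^ (m - 1) with hc_def
    have hsub1 : ((n : ℝ≥0∞) - 1) = ((n - 1 : ℕ) : ℝ≥0∞) := by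
      rw [ENNReal.natCast_sub, Nat.cast_one]
    have hsub : Bad ⊆ ⋃ (f : {f : Fin m → ℕ // (Finset.univ.image f).card + k ≤ m}), A f.val := by
      intro ω hω
      have hω' : g ω + k ≤ m := hω
      refine Set.mem_iUnion.mpr ⟨⟨fun i : Fin m => T i.val ω, ?_⟩, hcov ω⟩
      rw [← hgvec ω]
      exact hω'
    set ν : (Fin m → ℕ) → ℝ≥0∞ := fun f => if f ∈ badF then c else 0 with hν_def
    have h2 : ∀ f : {f : Fin m → ℕ // (Finset.univ.image f).card + k ≤ m},
        μ (A f.val) ≤ ν f.val := by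
      intro f
      have hl := hlaw (m - 1) (fext m f.val)
      have : A f.val = {ω | ∀ i ≤ m - 1, T i ω = fext m f.val i} := rfl
      rw [this, hl]
      split_ifs with hc1
      · have hmem : f.val ∈ Fintype.piFinset (fun _ : Fin m => Finset.range n) := by
          rw [Fintype.mem_piFinset]
          intro i
          rw [Finset.mem_range]
          have := hc1.2.1 i.val (by omega)
          simpa [fext, i.isLt] using this
        have : ν f.val = c := if_pos (Finset.mem_filter.mpr ⟨hmem, f.prop⟩)
        rw [this]
      · exact zero_le
    have hmeas_bad : μ Bad ≤ (badF.card : ℝ≥0∞) * c := by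
      calc μ Bad ≤ μ (⋃ (f : {f : Fin m → ℕ // (Finset.univ.image f).card + k ≤ m}), A f.val) :=
            measure_mono hsub
        _ ≤ ∑' (f : {f : Fin m → ℕ // (Finset.univ.image f).card + k ≤ m}), μ (A f.val) :=
            measure_iUnion_le _
        _ ≤ ∑' (f : {f : Fin m → ℕ // (Finset.univ.image f).card + k ≤ m}), ν f.val :=
            ENNReal.tsum_le_tsum h2
        _ ≤ ∑' (f : Fin m → ℕ), ν f :=
            ENNReal.tsum_comp_le_tsum_of_injective Subtype.val_injective ν
        _ = (badF.card : ℝ≥0∞) * c := by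
            rw [tsum_eq_sum (s := badF) (fun f hf => if_neg hf)]
            rw [Finset.sum_congr rfl (fun f hf => if_pos hf), Finset.sum_const, nsmul_eq_mul]
    have hc_ne_top : c ≠ ⊤ := by
      rw [hc_def, hsub1]
      apply ENNReal.pow_ne_top
      rw [ENNReal.inv_ne_top]
      exact_mod_cast Nat.cast_ne_zero.mpr (show n - 1 ≠ 0 by omega)
    have hne : (badF.card : ℝ≥0∞) * c ≠ ⊤ := ENNReal.mul_ne_top (ENNReal.natCast_ne_top _) hc_ne_top
    have hreal : (μ Bad).toReal ≤ (badF.card : ℝ) * (((n : ℝ) - 1)⁻¹) ^ (m - 1) := by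
      have h := ENNReal.toReal_mono hne hmeas_bad
      rw [ENNReal.toReal_mul] at h
      have e2 : ((badF.card : ℝ≥0∞)).toReal = (badF.card : ℝ) := by simp
      have h2r : ((n : ℝ≥0∞) - 1).toReal = (n : ℝ) - 1 := by
        rw [ENNReal.toReal_sub_of_le (by exact_mod_cast (show (1:ℕ) ≤ n by omega))
          (ENNReal.natCast_ne_top n)]
        simp
      have e3 : c.toReal = (((n : ℝ) - 1)⁻¹) ^ (m - 1) := by
        rw [hc_def, ENNReal.toReal_pow, ENNReal.toReal_inv, h2r]
      rw [e2, e3] at h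
      exact h
    calc ∫ ω, φ ^ g ω ∂μ ≤ φ ^ (m - k) + (μ Bad).toReal := hstep
      _ ≤ φ ^ (m - k) + (badF.card : ℝ) * (((n : ℝ) - 1)⁻¹) ^ (m - 1) := by linarith

end Stmt8Aux2


section MainAux

/-- subadditivity of `x ↦ x^p` for `p ∈ [0,1]` on nonnegative reals. -/
lemma stmt8_rpow_add_le {a b p : ℝ} (ha : 0 ≤ a) (hb : 0 ≤ b) (hp0 : 0 ≤ p) (hp1 : p ≤ 1) :
    (a + b) ^ p ≤ a ^ p + b ^ p := by
  calc (a + b) ^ p = (((a.toNNReal + b.toNNReal : ℝ≥0)) : ℝ) ^ p := by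
        rw [NNReal.coe_add, Real.coe_toNNReal _ ha, Real.coe_toNNReal _ hb]
    _ = (((a.toNNReal + b.toNNReal) ^ p : ℝ≥0) : ℝ) := by
        rw [NNReal.coe_rpow]
    _ ≤ (((a.toNNReal ^ p + b.toNNReal ^ p : ℝ≥0)) : ℝ) := by
        exact_mod_cast NNReal.rpow_add_le_add_rpow _ _ hp0 hp1
    _ = a ^ p + b ^ p := by
        rw [NNReal.coe_add, NNReal.coe_rpow, NNReal.coe_rpow,
          Real.coe_toNNReal _ ha, Real.coe_toNNReal _ hb]

end MainAux

set_option maxHeartbeats 2000000 in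
/-- Lemma 4.6: for the simple random walk on the complete graph `C_n` started at vertex `0`,
with `R_m` the number of distinct vertices among the first `m` positions,
`sup_{C₁ log n ≤ m ≤ C₃ log n} |(E[φ^{R_m}])^{1/m} - φ| → 0` as `n → ∞`. -/
theorem stmt_8
    {Ω : Type*} [MeasurableSpace Ω] (P : ℕ → Measure Ω)
    [∀ n, IsProbabilityMeasure (P n)]
    (S : ℕ → ℕ → Ω → ℕ) (hSm : ∀ n i, Measurable (S n i))
    -- the walk on `C_n` starts at vertex `0` and jumps to a uniform different vertex:
    (hlaw : ∀ n : ℕ, 2 ≤ n → ∀ m : ℕ, ∀ f : ℕ → ℕ,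
      P n {ω | ∀ i ≤ m, S n i ω = f i} =
        if f 0 = 0 ∧ (∀ i ≤ m, f i < n) ∧ (∀ i < m, f (i + 1) ≠ f i)
        then (((n : ℝ≥0∞) - 1)⁻¹) ^ m else 0)
    (R : ℕ → ℕ → Ω → ℕ)
    (hR : ∀ n m ω, R n m ω = ((Finset.range m).image (fun i => S n i ω)).card)
    (φ : ℝ) (hφ : φ ∈ Set.Ioo (0 : ℝ) 1)
    (C₁ C₃ : ℝ) (hC₁ : 0 < C₁) (hC₁₃ : C₁ < C₃) :
    ∀ ε : ℝ, 0 < ε → ∀ᶠ n : ℕ in atTop, ∀ m : ℕ,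
      C₁ * Real.log n ≤ m → (m : ℝ) ≤ C₃ * Real.log n →
      |(∫ ω, φ ^ R n m ω ∂(P n)) ^ ((1 : ℝ) / m) - φ| < ε := by
  obtain ⟨hφ0, hφ1⟩ := hφ
  intro ε hε
  -- choose δ
  obtain ⟨δ, hδ0, hδhalf, hδφ⟩ : ∃ δ : ℝ, 0 < δ ∧ δ ≤ 1/2 ∧ φ ^ (1 - 2*δ) < φ + ε/2 := by
    have hrw : (fun d : ℝ => φ ^ (1 - 2*d)) = fun d : ℝ => Real.exp (Real.log φ * (1 - 2*d)) := by
      funext d; rw [Real.rpow_def_of_pos hφ0]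
    have hcont : Continuous fun d : ℝ => φ ^ (1 - 2*d) := by
      rw [hrw]; fun_prop
    have htend : Tendsto (fun d : ℝ => φ ^ (1 - 2*d)) (nhds 0) (nhds φ) := by
      have h := hcont.tendsto 0
      have e : φ ^ (1 - 2*(0:ℝ)) = φ := by
        norm_num
      rwa [e] at h
    have hev : ∀ᶠ d in nhds (0:ℝ), φ ^ (1 - 2*d) < φ + ε/2 := by
      have := htend.eventually (eventually_mem_set.mpr (Iio_mem_nhds (by linarith : φ < φ + ε/2)))
      simpa [Set.mem_Iio] using this
    obtain ⟨r, hr0, hr⟩ := Metric.eventually_nhds_iff.mp hev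
    refine ⟨min (r/2) (1/2), by positivity, min_le_right _ _, ?_⟩
    apply hr
    rw [Real.dist_eq, sub_zero, abs_of_pos (by positivity)]
    calc min (r/2) (1/2) ≤ r/2 := min_le_left _ _
      _ < r := by linarith
  -- eventual conditions in n
  have hlogtend : Tendsto (fun nn : ℕ => Real.log nn) atTop atTop :=
    Real.tendsto_log_atTop.comp tendsto_natCast_atTop_atTop
  have hE2 : ∀ᶠ nn : ℕ in atTop, 1/δ ≤ C₁ * Real.log nn :=
    (hlogtend.const_mul_atTop hC₁).eventually_ge_atTop (1/δ)
  have h0 : Tendsto (fun nn : ℕ => C₃ * Real.log nn / nn) atTop (nhds 0) := by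
    have h1 : (fun x : ℝ => C₃ * Real.log x) =o[atTop] id :=
      Real.isLittleO_log_id_atTop.const_mul_left C₃
    have h2 := h1.tendsto_div_nhds_zero
    exact h2.comp tendsto_natCast_atTop_atTop
  have hE4 : ∀ᶠ nn : ℕ in atTop, C₃ * Real.log nn / nn < 1 := by
    have := h0.eventually (eventually_mem_set.mpr (Iio_mem_nhds (by norm_num : (0:ℝ) < 1)))
    simpa [Set.mem_Iio] using this
  have hE5 : ∀ᶠ nn : ℕ in atTop,
      4 * Real.exp (1/C₁) * (C₃ * Real.log nn / nn) ^ δ < ε/2 := by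
    have hc : ContinuousAt (fun x : ℝ => x ^ δ) 0 :=
      Real.continuousAt_rpow_const 0 δ (Or.inr hδ0.le)
    have h3 : Tendsto (fun nn : ℕ => (C₃ * Real.log nn / nn) ^ δ) atTop (nhds 0) := by
      have h := hc.tendsto.comp h0
      simpa [Real.zero_rpow (ne_of_gt hδ0), Function.comp_def] using h
    have h4 : Tendsto (fun nn : ℕ => 4 * Real.exp (1/C₁) * (C₃ * Real.log nn / nn) ^ δ)
        atTop (nhds 0) := by
      simpa using h3.const_mul (4 * Real.exp (1/C₁))
    have := h4.eventually (eventually_mem_set.mpr (Iio_mem_nhds (by positivity : (0:ℝ) < ε/2)))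
    simpa [Set.mem_Iio] using this
  filter_upwards [eventually_ge_atTop 2, hE2, hE4, hE5] with n hn2 hn3 hn4 hn5
  intro m hm1 hm2
  -- basic facts
  have hnR2 : (2:ℝ) ≤ (n:ℝ) := by exact_mod_cast hn2
  have hnpos : (0:ℝ) < n := by linarith only [hnR2]
  have hδinv : (2:ℝ) ≤ 1/δ := by
    rw [le_div_iff₀ hδ0]; linarith only [hδhalf]
  have hmR : (1:ℝ)/δ ≤ m := le_trans hn3 hm1
  have hm1' : 1 ≤ m := by
    have : (1:ℝ) ≤ (m:ℝ) := by linarith only [hmR, hδinv]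
    exact_mod_cast this
  have hmpos : (0:ℝ) < m := by
    have h : (1:ℝ) ≤ (m:ℝ) := by exact_mod_cast hm1'
    linarith only [h]
  have hδm : 1 ≤ δ * (m:ℝ) := by
    have h := mul_le_mul_of_nonneg_left hmR hδ0.le
    rwa [mul_one_div_cancel (ne_of_gt hδ0)] at h
  have hlogpos : 0 < Real.log n := by
    rcases le_or_gt (Real.log n) 0 with h | h
    · exfalso
      have h1 : C₁ * Real.log n ≤ C₁ * 0 := mul_le_mul_of_nonneg_left h hC₁.le
      rw [mul_zero] at h1
      have h2 : (0:ℝ) < 1/δ := by positivity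
      linarith only [hn3, h1, h2]
    · exact h
  have hmnR : (m:ℝ) ≤ (n:ℝ) := by
    have h := (div_lt_one hnpos).mp hn4
    linarith only [h, hm2]
  have hmn : m ≤ n := by exact_mod_cast hmnR
  set k := ⌈δ * m⌉₊ with hk_def
  have hk_ge : δ * (m:ℝ) ≤ (k:ℝ) := Nat.le_ceil _
  have hk_le : k ≤ m := by
    rw [hk_def]
    apply Nat.ceil_le.mpr
    calc δ * (m:ℝ) ≤ (1/2) * (m:ℝ) := mul_le_mul_of_nonneg_right hδhalf (by positivity)
      _ ≤ (m:ℝ) := by linarith only [hmpos]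
  have hk_le2 : (k:ℝ) ≤ 2*δ*(m:ℝ) := by
    have h := Nat.ceil_lt_add_one (by positivity : (0:ℝ) ≤ δ * m)
    rw [← hk_def] at h
    linarith only [h, hδm]
  -- key lemma
  obtain ⟨hlow, hup⟩ := Stmt8Aux2.key (P n) (S n) (hSm n) n m k hn2 hm1' hk_le
    (fun m' f => hlaw n hn2 m' f) φ hφ0 hφ1.le
  have hRint : (∫ ω, φ ^ R n m ω ∂(P n))
      = ∫ ω, φ ^ ((Finset.range m).image (fun i => S n i ω)).card ∂(P n) := by
    congr 1
    funext ω
    rw [hR]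
  rw [hRint]
  set I := ∫ ω, φ ^ ((Finset.range m).image (fun i => S n i ω)).card ∂(P n) with hI_def
  -- counting bound
  have hxge1 : 1 ≤ (n:ℝ)/(m:ℝ) := (one_le_div hmpos).mpr hmnR
  have hcb := Stmt8Aux.card_bad_le m n k hm1' hxge1
  set Bc : ℝ := (((Fintype.piFinset (fun _ : Fin m => Finset.range n)).filter
    (fun f => (Finset.univ.image f).card + k ≤ m)).card : ℝ) with hBc_def
  have hBc0 : 0 ≤ Bc := by positivity
  have hBc : Bc ≤ (2*(n:ℝ))^m * ((m:ℝ)/(n:ℝ))^k := by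
    have hpow : (0:ℝ) < ((n:ℝ)/(m:ℝ))^k := by positivity
    rw [← le_div_iff₀ hpow] at hcb
    calc Bc ≤ (2*(n:ℝ))^m / ((n:ℝ)/(m:ℝ))^k := hcb
      _ = (2*(n:ℝ))^m * ((m:ℝ)/(n:ℝ))^k := by
          rw [div_eq_mul_inv, ← inv_pow, inv_div]
  set a : ℝ := (n:ℝ) - 1 with ha_def
  have ha1 : (1:ℝ) ≤ a := by rw [ha_def]; linarith
  have hapos : (0:ℝ) < a := by linarith
  set D : ℝ := (2*(n:ℝ))^m * ((m:ℝ)/(n:ℝ))^k * (a⁻¹)^(m-1) with hD_def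
  have hD0 : 0 ≤ D := by positivity
  have hupD : I ≤ φ^(m-k) + D := by
    refine le_trans hup ?_
    have : Bc * (a⁻¹)^(m-1) ≤ D := by
      rw [hD_def]
      apply mul_le_mul_of_nonneg_right hBc (by positivity)
    linarith only [this]
  have hIpos : (0:ℝ) < I := lt_of_lt_of_le (by positivity : (0:ℝ) < φ^m) hlow
  set p : ℝ := 1/(m:ℝ) with hp_def
  have hppos : 0 < p := by positivity
  have hple1 : p ≤ 1 := by
    rw [hp_def, div_le_one hmpos]
    linarith only [hmpos, hm1', show (1:ℝ) ≤ (m:ℝ) from by exact_mod_cast hm1']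
  have hmne : (m:ℝ) ≠ 0 := ne_of_gt hmpos
  -- lower bound on I^p
  have hlower : φ ≤ I ^ p := by
    have h := Real.rpow_le_rpow (by positivity : (0:ℝ) ≤ φ^m) hlow hppos.le
    rwa [← Real.rpow_natCast φ m, ← Real.rpow_mul hφ0.le, hp_def, mul_one_div,
      div_self hmne, Real.rpow_one] at h
  -- upper bound on I^p
  have h1 : I ^ p ≤ (φ^(m-k) + D) ^ p := Real.rpow_le_rpow hIpos.le hupD hppos.le
  have h2 : (φ^(m-k) + D) ^ p ≤ (φ^(m-k))^p + D^p :=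
    stmt8_rpow_add_le (by positivity) hD0 hppos.le hple1
  have h3 : (φ^(m-k))^p ≤ φ ^ (1 - 2*δ) := by
    rw [← Real.rpow_natCast φ (m-k), ← Real.rpow_mul hφ0.le]
    apply Real.rpow_le_rpow_of_exponent_ge hφ0 hφ1.le
    have hcast : ((m - k : ℕ) : ℝ) = (m:ℝ) - (k:ℝ) := by
      rw [Nat.cast_sub hk_le]
    rw [hcast, hp_def, mul_one_div, le_div_iff₀ hmpos]
    have e : (1 - 2*δ) * (m:ℝ) = (m:ℝ) - 2*δ*(m:ℝ) := by ring
    rw [e]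
    linarith only [hk_le2]
  -- bound D^p
  have hXp : ((2*(n:ℝ))^m : ℝ) ^ p = 2*(n:ℝ) := by
    rw [← Real.rpow_natCast (2*(n:ℝ)) m, ← Real.rpow_mul (by positivity), hp_def,
      mul_one_div, div_self hmne, Real.rpow_one]
  have hbpos : (0:ℝ) < (m:ℝ)/(n:ℝ) := by positivity
  have hble1 : (m:ℝ)/(n:ℝ) ≤ 1 := by
    rw [div_le_one hnpos]; exact hmnR
  have hYp : (((m:ℝ)/(n:ℝ))^k : ℝ) ^ p ≤ ((m:ℝ)/(n:ℝ)) ^ δ := by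
    rw [← Real.rpow_natCast ((m:ℝ)/(n:ℝ)) k, ← Real.rpow_mul hbpos.le]
    apply Real.rpow_le_rpow_of_exponent_ge hbpos hble1
    rw [hp_def, mul_one_div, le_div_iff₀ hmpos]
    linarith only [hk_ge]
  have hZp : ((a⁻¹)^(m-1) : ℝ) ^ p ≤ a⁻¹ * Real.exp (1/C₁) := by
    have e1 : ((a⁻¹)^(m-1) : ℝ) ^ p = a ^ (-((((m-1:ℕ):ℝ)) * p)) := by
      rw [← Real.rpow_natCast (a⁻¹) (m-1), ← Real.rpow_mul (by positivity),
        Real.inv_rpow hapos.le, ← Real.rpow_neg hapos.le]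
    have e2 : -((((m-1:ℕ):ℝ)) * p) = -1 + 1/(m:ℝ) := by
      rw [Nat.cast_sub hm1', Nat.cast_one, hp_def]
      field_simp
      ring
    rw [e1, e2, Real.rpow_add hapos, Real.rpow_neg_one]
    apply mul_le_mul_of_nonneg_left _ (by positivity)
    -- a ^ (1/m) ≤ exp (1/C₁)
    rw [Real.rpow_def_of_pos hapos]
    apply Real.exp_le_exp.mpr
    have hla : Real.log a ≤ Real.log n := Real.log_le_log hapos (by rw [ha_def]; linarith)
    have h6 : Real.log n * (1/(m:ℝ)) ≤ 1/C₁ := by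
      rw [mul_one_div, div_le_div_iff₀ hmpos hC₁]
      have e : Real.log ↑n * C₁ = C₁ * Real.log ↑n := by ring
      rw [e, one_mul]
      exact hm1
    calc Real.log a * (1/(m:ℝ)) ≤ Real.log n * (1/(m:ℝ)) := by
          apply mul_le_mul_of_nonneg_right hla (by positivity)
      _ ≤ 1/C₁ := h6
  have h4 : D ^ p ≤ 4 * Real.exp (1/C₁) * (C₃ * Real.log n / n) ^ δ := by
    have hD_split : D ^ p = ((2*(n:ℝ))^m) ^ p * (((m:ℝ)/(n:ℝ))^k) ^ p * ((a⁻¹)^(m-1)) ^ p := by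
      rw [hD_def, Real.mul_rpow (by positivity) (by positivity),
        Real.mul_rpow (by positivity) (by positivity)]
    rw [hD_split, hXp]
    have hmono : ((m:ℝ)/(n:ℝ)) ^ δ ≤ (C₃ * Real.log n / n) ^ δ := by
      apply Real.rpow_le_rpow hbpos.le _ hδ0.le
      exact (div_le_div_iff_of_pos_right hnpos).mpr hm2
    calc 2*(n:ℝ) * ((((m:ℝ)/(n:ℝ))^k) ^ p) * (((a⁻¹)^(m-1)) ^ p)
        ≤ 2*(n:ℝ) * (((m:ℝ)/(n:ℝ)) ^ δ) * (a⁻¹ * Real.exp (1/C₁)) := by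
          have t1 : 2*(n:ℝ) * ((((m:ℝ)/(n:ℝ))^k) ^ p) ≤ 2*(n:ℝ) * (((m:ℝ)/(n:ℝ)) ^ δ) :=
            mul_le_mul_of_nonneg_left hYp (by positivity)
          exact mul_le_mul t1 hZp (by positivity) (by positivity)
      _ = (2*(n:ℝ) * a⁻¹) * Real.exp (1/C₁) * (((m:ℝ)/(n:ℝ)) ^ δ) := by ring
      _ ≤ 4 * Real.exp (1/C₁) * (((m:ℝ)/(n:ℝ)) ^ δ) := by
          have h2na : 2*(n:ℝ) * a⁻¹ ≤ 4 := by
            rw [← div_eq_mul_inv, div_le_iff₀ hapos, ha_def]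
            linarith only [hnR2]
          have hrest : (0:ℝ) ≤ Real.exp (1/C₁) * (((m:ℝ)/(n:ℝ)) ^ δ) := by positivity
          have h7 := mul_le_mul_of_nonneg_right h2na hrest
          linarith only [h7]
      _ ≤ 4 * Real.exp (1/C₁) * ((C₃ * Real.log n / n) ^ δ) := by
          exact mul_le_mul_of_nonneg_left hmono (by positivity)
  have hfinal : I ^ p < φ + ε := by
    calc I ^ p ≤ (φ^(m-k))^p + D^p := le_trans h1 h2
      _ ≤ φ ^ (1-2*δ) + 4 * Real.exp (1/C₁) * (C₃ * Real.log n / n) ^ δ := add_le_add h3 h4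
      _ < (φ + ε/2) + ε/2 := add_lt_add hδφ hn5
      _ = φ + ε := by ring
  rw [abs_lt]
  exact ⟨by linarith only [hlower, hε], by linarith only [hfinal]⟩
end

section
/- Let (S_l) be simple random walk on the complete graph C_n started at vertex 1 with range R_m. Fix ε ∈ (0,1) and θ > 0. Then for m with m(1−ε)e^θ < n−1, P(R_m ≤ m(1−ε)) ≤ e^{−θ m ε} / (1 − m e^θ (1−ε)/(n−1))^{m(1−ε)}. -/
/-!
A walk `f` on `C_n` with `f 0 = 0` and at most `k` distinct values among `f 0, …, f M` is
determined by the set `s` of steps that reach a new vertex (`#s < k`) together with, at each step,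
either the new vertex (`n - 1` choices) or the rank of the revisited vertex among the visited ones
other than the current one (at most `k - 1` choices). Every walk has probability `(n - 1)⁻¹ ^ M`,
so with `k = ⌊m (1 - ε)⌋` and `m = M + 1` the probability is at most
`∑_{#s < k} ((k - 1) / (n - 1)) ^ (M - #s)`. Since `(k - 1) / (n - 1) ≤ y e^{-θ}` for
`y = m e^θ (1 - ε) / (n - 1)`, inserting the factor `(1 - y) ^ (#s - (k - 1)) ≥ 1` bounds this by
`e^{-θ (m - k)} (1 - y) ^ (-(k - 1))` times the binomial expansion of `((1 - y) + y) ^ M = 1`.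
-/

open Finset

namespace CompleteGraphWalk

-- An `abbrev`, so that `if IsWalk n M f then …` elaborates to the `if` in the law of the walk.
abbrev IsWalk (n M : ℕ) (f : ℕ → ℕ) : Prop :=
  f 0 = 0 ∧ (∀ i ≤ M, f i < n) ∧ ∀ i < M, f (i + 1) ≠ f i

def visited (f : ℕ → ℕ) (i : ℕ) : Finset ℕ := (range i).image f

def newSteps (f : ℕ → ℕ) (M : ℕ) : Finset ℕ :=
  {i ∈ range M | f (i + 1) ∉ visited f (i + 1)}

def stepCode (f : ℕ → ℕ) (i : ℕ) : ℕ :=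
  if f (i + 1) ∈ visited f (i + 1) then
    #{x ∈ (visited f (i + 1)).erase (f i) | x < f (i + 1)}
  else f (i + 1) - 1

lemma visited_succ (f : ℕ → ℕ) (i : ℕ) : visited f (i + 1) = insert (f i) (visited f i) := by
  rw [visited, visited, range_add_one, image_insert]

lemma visited_congr {f f' : ℕ → ℕ} {i : ℕ} (h : ∀ j < i, f j = f' j) :
    visited f i = visited f' i :=
  image_congr fun j hj => h j (mem_range.1 hj)

lemma card_visited_eq (f : ℕ → ℕ) (M : ℕ) : #(visited f (M + 1)) = #(newSteps f M) + 1 := by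
  induction M with
  | zero => simp [visited, newSteps]
  | succ M ih =>
    rw [visited_succ, newSteps, range_add_one, filter_insert, ← newSteps]
    by_cases hnew : f (M + 1) ∈ visited f (M + 1)
    · rw [card_insert_of_mem hnew, if_neg (not_not.2 hnew), ih]
    · have hM : M ∉ newSteps f M := fun h => notMem_range_self (mem_filter.1 h).1
      rw [card_insert_of_notMem hnew, if_pos hnew, card_insert_of_notMem hM, ih]

lemma card_filter_lt_strictMonoOn (s : Finset ℕ) :
    StrictMonoOn (fun a => #{x ∈ s | x < a}) s := by
  intro a ha b _ hab
  refine card_lt_card ⟨fun x hx => ?_, fun hsub => ?_⟩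
  · simp only [mem_filter] at hx ⊢
    exact ⟨hx.1, hx.2.trans hab⟩
  · simpa using hsub (mem_filter.2 ⟨ha, hab⟩)

lemma card_filter_lt_lt_card {s : Finset ℕ} {a : ℕ} (ha : a ∈ s) : #{x ∈ s | x < a} < #s :=
  card_lt_card (filter_ssubset.2 ⟨a, ha, lt_irrefl a⟩)

lemma stepCode_lt_of_mem {f : ℕ → ℕ} {i : ℕ} (hstep : f (i + 1) ≠ f i)
    (hold : f (i + 1) ∈ visited f (i + 1)) : stepCode f i < #(visited f (i + 1)) - 1 := by
  rw [stepCode, if_pos hold]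
  have hprev : f i ∈ visited f (i + 1) := mem_image_of_mem f (self_mem_range_succ i)
  rw [← card_erase_of_mem hprev]
  exact card_filter_lt_lt_card (mem_erase.2 ⟨hstep, hold⟩)

lemma zero_mem_visited {f : ℕ → ℕ} (h0 : f 0 = 0) {i : ℕ} (hi : 0 < i) : 0 ∈ visited f i :=
  mem_image.2 ⟨0, mem_range.2 hi, h0⟩

lemma stepCode_lt_of_notMem {n : ℕ} {f : ℕ → ℕ} {i : ℕ} (h0 : f 0 = 0) (hn : f (i + 1) < n)
    (hnew : f (i + 1) ∉ visited f (i + 1)) : stepCode f i < n - 1 := by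
  rw [stepCode, if_neg hnew]
  have : f (i + 1) ≠ 0 := fun h => hnew (h ▸ zero_mem_visited h0 i.succ_pos)
  omega

lemma apply_succ_eq_of_stepCode_eq {f f' : ℕ → ℕ} {i : ℕ} (h0 : f 0 = 0) (h0' : f' 0 = 0)
    (hstep : f (i + 1) ≠ f i) (hstep' : f' (i + 1) ≠ f' i) (hagree : ∀ j ≤ i, f j = f' j)
    (hnew : f (i + 1) ∈ visited f (i + 1) ↔ f' (i + 1) ∈ visited f' (i + 1))
    (hcode : stepCode f i = stepCode f' i) : f (i + 1) = f' (i + 1) := by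
  have hvis : visited f (i + 1) = visited f' (i + 1) :=
    visited_congr fun j hj => hagree j (Nat.lt_succ_iff.1 hj)
  by_cases hold : f (i + 1) ∈ visited f (i + 1)
  · have hold' := hnew.1 hold
    rw [stepCode, stepCode, if_pos hold, if_pos hold', ← hvis, ← hagree i le_rfl] at hcode
    rw [← hvis] at hold'
    rw [← hagree i le_rfl] at hstep'
    exact (card_filter_lt_strictMonoOn _).injOn (mem_erase.2 ⟨hstep, hold⟩)
      (mem_erase.2 ⟨hstep', hold'⟩) hcode
  · have hold' := mt hnew.2 hold
    rw [stepCode, stepCode, if_neg hold, if_neg hold'] at hcode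
    have : f (i + 1) ≠ 0 := fun h => hold (h ▸ zero_mem_visited h0 i.succ_pos)
    have : f' (i + 1) ≠ 0 := fun h => hold' (h ▸ zero_mem_visited h0' i.succ_pos)
    omega

lemma eqOn_of_newSteps_eq_of_stepCode_eq {M : ℕ} {f f' : ℕ → ℕ} (h0 : f 0 = 0) (h0' : f' 0 = 0)
    (hstep : ∀ i < M, f (i + 1) ≠ f i) (hstep' : ∀ i < M, f' (i + 1) ≠ f' i)
    (hnew : newSteps f M = newSteps f' M) (hcode : ∀ i < M, stepCode f i = stepCode f' i) :
    ∀ i ≤ M, f i = f' i := by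
  suffices ∀ i ≤ M, ∀ j ≤ i, f j = f' j from fun i hi => this i hi i le_rfl
  intro i
  induction i with
  | zero => intro _ j hj; rw [Nat.le_zero.1 hj, h0, h0']
  | succ i ih =>
    intro hi j hj
    have hagree := ih (by omega)
    rcases Nat.of_le_succ hj with hj | rfl
    · exact hagree j hj
    refine apply_succ_eq_of_stepCode_eq h0 h0' (hstep i hi) (hstep' i hi) hagree ?_ (hcode i hi)
    have hiM : i < M := hi
    simpa [newSteps, hiM, not_iff_not] using congrArg (i ∈ ·) hnew

lemma stepCode_lt {n M k : ℕ} {f : ℕ → ℕ} (hf : IsWalk n M f) (hk : #(visited f (M + 1)) ≤ k)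
    {i : ℕ} (hi : i < M) : stepCode f i < if i ∈ newSteps f M then n - 1 else k - 1 := by
  by_cases hnew : f (i + 1) ∈ visited f (i + 1)
  · have hsub : visited f (i + 1) ⊆ visited f (M + 1) :=
      image_subset_image (range_subset_range.2 (by omega))
    have := card_le_card hsub
    have := stepCode_lt_of_mem (hf.2.2 i hi) hnew
    rw [if_neg (by simp [newSteps, hnew])]
    omega
  · rw [if_pos (by simp [newSteps, hnew, hi])]
    exact stepCode_lt_of_notMem hf.1 (hf.2.1 (i + 1) hi) hnew

def extendByZero {m : ℕ} (g : Fin m → ℕ) (i : ℕ) : ℕ := if h : i < m then g ⟨i, h⟩ else 0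

lemma extendByZero_of_lt {m : ℕ} (g : Fin m → ℕ) {i : ℕ} (h : i < m) :
    extendByZero g i = g ⟨i, h⟩ :=
  dif_pos h

def shortRangeWalks (n M k : ℕ) : Finset (Fin (M + 1) → ℕ) :=
  {g ∈ Fintype.piFinset fun _ => range n |
    IsWalk n M (extendByZero g) ∧ #(visited (extendByZero g) (M + 1)) ≤ k}

lemma mem_shortRangeWalks {n M k : ℕ} {g : Fin (M + 1) → ℕ} :
    g ∈ shortRangeWalks n M k ↔
      IsWalk n M (extendByZero g) ∧ #(visited (extendByZero g) (M + 1)) ≤ k := by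
  refine ⟨fun h => (mem_filter.1 h).2, fun h => mem_filter.2 ⟨?_, h⟩⟩
  refine Fintype.mem_piFinset.2 fun i => mem_range.2 ?_
  simpa [extendByZero_of_lt g i.isLt] using h.1.2.1 i (Nat.lt_succ_iff.1 i.isLt)

lemma prod_ite_mem_range {M : ℕ} {s : Finset ℕ} (hs : s ⊆ range M) (a b : ℕ) :
    ∏ i : Fin M, (if (i : ℕ) ∈ s then a else b) = a ^ #s * b ^ (M - #s) := by
  rw [Fin.prod_univ_eq_prod_range (fun i => if i ∈ s then a else b), prod_ite, prod_const,
    prod_const, filter_not, filter_mem_eq_inter, inter_eq_right.2 hs, card_sdiff_of_subset hs,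
    card_range]

def walkCountBound (n M k : ℕ) : ℕ :=
  ∑ s ∈ (range M).powerset with #s < k, (n - 1) ^ #s * (k - 1) ^ (M - #s)

lemma card_shortRangeWalks_le (n M k : ℕ) : #(shortRangeWalks n M k) ≤ walkCountBound n M k := by
  let codes : Finset ((_ : Finset ℕ) × (Fin M → ℕ)) :=
    {s ∈ (range M).powerset | #s < k}.sigma fun s =>
      Fintype.piFinset fun i : Fin M => range (if (i : ℕ) ∈ s then n - 1 else k - 1)
  let encode (g : Fin (M + 1) → ℕ) : (_ : Finset ℕ) × (Fin M → ℕ) :=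
    ⟨newSteps (extendByZero g) M, fun i => stepCode (extendByZero g) i⟩
  have hmaps : ∀ g ∈ shortRangeWalks n M k, encode g ∈ codes := by
    intro g hg
    obtain ⟨hwalk, hk⟩ := mem_shortRangeWalks.1 hg
    have hnew : #(newSteps (extendByZero g) M) < k := by
      have := card_visited_eq (extendByZero g) M
      omega
    refine mem_sigma.2 ⟨mem_filter.2 ⟨mem_powerset.2 (filter_subset _ _), hnew⟩, ?_⟩
    exact Fintype.mem_piFinset.2 fun i => mem_range.2 (stepCode_lt hwalk hk i.isLt)
  have hinj : Set.InjOn encode (shortRangeWalks n M k) := by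
    intro g hg g' hg' heq
    obtain ⟨⟨h0, -, hstep⟩, -⟩ := mem_shortRangeWalks.1 hg
    obtain ⟨⟨h0', -, hstep'⟩, -⟩ := mem_shortRangeWalks.1 hg'
    obtain ⟨hnew, hcode⟩ := Sigma.mk.inj_iff.1 heq
    have hagree := eqOn_of_newSteps_eq_of_stepCode_eq h0 h0' hstep hstep' hnew
      fun i hi => congrFun (eq_of_heq hcode) ⟨i, hi⟩
    funext i
    simpa [extendByZero_of_lt _ i.isLt] using hagree i (Nat.lt_succ_iff.1 i.isLt)
  calc #(shortRangeWalks n M k) ≤ #codes := card_le_card_of_injOn encode hmaps hinj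
    _ = _ := by
      rw [card_sigma]
      refine sum_congr rfl fun s hs => ?_
      rw [Fintype.card_piFinset]
      simp only [card_range]
      exact prod_ite_mem_range (mem_powerset.1 (mem_filter.1 hs).1) _ _

open MeasureTheory ENNReal in
lemma measure_card_visited_le {Ω : Type*} [MeasurableSpace Ω] (P : Measure Ω) (n M k : ℕ)
    (S : ℕ → Ω → ℕ)
    (hlaw : ∀ f : ℕ → ℕ, P {ω | ∀ i ≤ M, S i ω = f i} =
      if IsWalk n M f then ((n : ℝ≥0∞) - 1)⁻¹ ^ M else 0) :
    P {ω | #(visited (S · ω) (M + 1)) ≤ k} ≤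
      #(shortRangeWalks n M k) * ((n : ℝ≥0∞) - 1)⁻¹ ^ M := by
  set A := {ω | #(visited (S · ω) (M + 1)) ≤ k}
  set q := ((n : ℝ≥0∞) - 1)⁻¹ ^ M
  let E (g : Fin (M + 1) → ℕ) : Set Ω := {ω | ∀ i ≤ M, S i ω = extendByZero g i}
  have hcover : A ⊆ ⋃ g, A ∩ E g := fun ω hω =>
    Set.mem_iUnion.2 ⟨fun i => S i ω, hω, fun i hi =>
      (extendByZero_of_lt (fun j : Fin (M + 1) => S j ω) (Nat.lt_succ_of_le hi)).symm⟩
  have hterm (g : Fin (M + 1) → ℕ) : P (A ∩ E g) ≤ if g ∈ shortRangeWalks n M k then q else 0 := by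
    by_cases hwalk : IsWalk n M (extendByZero g)
    · split_ifs with hg
      · exact (measure_mono Set.inter_subset_right).trans ((hlaw _).trans (if_pos hwalk)).le
      · suffices A ∩ E g = ∅ by rw [this, measure_empty]
        refine Set.eq_empty_of_forall_notMem fun ω ⟨hA, hE⟩ =>
          hg (mem_shortRangeWalks.2 ⟨hwalk, ?_⟩)
        rwa [← visited_congr fun i hi => hE i (by omega)]
    · exact (measure_mono_null Set.inter_subset_right ((hlaw _).trans (if_neg hwalk))).le.trans
        zero_le
  calc P A ≤ ∑' g, P (A ∩ E g) := (measure_mono hcover).trans (measure_iUnion_le _)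
    _ ≤ ∑' g, if g ∈ shortRangeWalks n M k then q else 0 := ENNReal.tsum_le_tsum hterm
    _ = #(shortRangeWalks n M k) * q := by
      rw [tsum_eq_sum (s := shortRangeWalks n M k) fun g hg => if_neg hg,
        sum_ite_of_true fun _ h => h, sum_const, nsmul_eq_mul]

lemma sum_powerset_card_lt_pow_le {ι : Type*} (u : Finset ι) (k : ℕ) {t y θ : ℝ} (ht : 0 ≤ t)
    (hθ : 0 ≤ θ) (hty : t * Real.exp θ ≤ y) (hy : y < 1) :
    ∑ s ∈ u.powerset with #s < k, t ^ (#u - #s) ≤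
      Real.exp (-θ) ^ (#u + 1 - k) / (1 - y) ^ (k - 1) := by
  have hy0 : 0 ≤ y := (mul_nonneg ht (Real.exp_pos θ).le).trans hty
  have hy1 : 0 < 1 - y := by linarith
  have hexp : Real.exp (-θ) ≤ 1 := Real.exp_le_one_iff.2 (by linarith)
  have hty' : t ≤ y * Real.exp (-θ) := by
    rw [Real.exp_neg, ← div_eq_mul_inv, le_div_iff₀ (Real.exp_pos θ)]
    exact hty
  set C := Real.exp (-θ) ^ (#u + 1 - k) / (1 - y) ^ (k - 1)
  have hterm : ∀ s ∈ {s ∈ u.powerset | #s < k},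
      t ^ (#u - #s) ≤ C * ((1 - y) ^ #s * y ^ (#u - #s)) := by
    intro s hs
    obtain ⟨hsu, hsk⟩ := mem_filter.1 hs
    have hsu := card_le_card (mem_powerset.1 hsu)
    have hratio : 1 ≤ (1 - y) ^ #s / (1 - y) ^ (k - 1) := by
      rw [one_le_div (by positivity)]
      exact pow_le_pow_of_le_one hy1.le (by linarith) (by omega)
    calc t ^ (#u - #s) ≤ (y * Real.exp (-θ)) ^ (#u - #s) := pow_le_pow_left₀ ht hty' _
      _ = Real.exp (-θ) ^ (#u - #s) * y ^ (#u - #s) := by ring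
      _ ≤ Real.exp (-θ) ^ (#u + 1 - k) * y ^ (#u - #s) := by
        gcongr ?_ * _
        exact pow_le_pow_of_le_one (Real.exp_pos _).le hexp (by omega)
      _ ≤ Real.exp (-θ) ^ (#u + 1 - k) * ((1 - y) ^ #s / (1 - y) ^ (k - 1)) * y ^ (#u - #s) := by
        gcongr
        exact le_mul_of_one_le_right (by positivity) hratio
      _ = C * ((1 - y) ^ #s * y ^ (#u - #s)) := by ring
  calc ∑ s ∈ u.powerset with #s < k, t ^ (#u - #s)
      ≤ ∑ s ∈ u.powerset with #s < k, C * ((1 - y) ^ #s * y ^ (#u - #s)) := sum_le_sum hterm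
    _ ≤ ∑ s ∈ u.powerset, C * ((1 - y) ^ #s * y ^ (#u - #s)) :=
      sum_le_sum_of_subset_of_nonneg (filter_subset _ _) fun _ _ _ => by positivity
    _ = C := by rw [← mul_sum, sum_pow_mul_eq_add_pow, sub_add_cancel, one_pow, mul_one]

lemma sum_pow_mul_pow_mul_inv_pow {ι : Type*} (u : Finset ι) (k : ℕ) {a c : ℝ} (ha : a ≠ 0) :
    (∑ s ∈ u.powerset with #s < k, a ^ #s * c ^ (#u - #s)) * a⁻¹ ^ #u =
      ∑ s ∈ u.powerset with #s < k, (c / a) ^ (#u - #s) := by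
  rw [sum_mul]
  refine sum_congr rfl fun s hs => ?_
  have hsu := card_le_card (mem_powerset.1 (mem_filter.1 hs).1)
  rw [← Nat.add_sub_cancel' hsu, pow_add, Nat.add_sub_cancel_left, inv_pow, inv_pow, div_pow]
  field_simp

lemma walkCountBound_mul_inv_pow_le (M k : ℕ) {n : ℕ} {ε θ : ℝ} (hε : ε ∈ Set.Ioo (0 : ℝ) 1)
    (hθ : 0 ≤ θ) (hk : (k : ℝ) ≤ ((M + 1 : ℕ) : ℝ) * (1 - ε))
    (hm : ((M + 1 : ℕ) : ℝ) * (1 - ε) * Real.exp θ < (n : ℝ) - 1) :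
    (walkCountBound n M k : ℝ) * ((n : ℝ) - 1)⁻¹ ^ M ≤
      Real.exp (-θ * (M + 1 : ℕ) * ε) /
        (1 - ((M + 1 : ℕ) : ℝ) * Real.exp θ * (1 - ε) / ((n : ℝ) - 1)) ^
          (((M + 1 : ℕ) : ℝ) * (1 - ε)) := by
  obtain ⟨hε0, hε1⟩ := hε
  set m : ℝ := ((M + 1 : ℕ) : ℝ)
  set N : ℝ := (n : ℝ) - 1
  set y := m * Real.exp θ * (1 - ε) / N
  have hm0 : 0 ≤ m * (1 - ε) := mul_nonneg (Nat.cast_nonneg _) (by linarith)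
  have hN : 0 < N := lt_of_le_of_lt (mul_nonneg hm0 (Real.exp_pos θ).le) hm
  have hn : 1 ≤ n := by
    have : (1 : ℝ) < n := by linarith
    exact_mod_cast this.le
  have hkm : k ≤ M + 1 := by
    have : (k : ℝ) ≤ ((M + 1 : ℕ) : ℝ) := hk.trans (by nlinarith)
    exact_mod_cast this
  have hy : y < 1 := by
    rw [div_lt_one hN]
    linarith
  have hk1 : ((k - 1 : ℕ) : ℝ) ≤ m * (1 - ε) :=
    (Nat.cast_le.2 (Nat.sub_le k 1)).trans hk
  have hty : ((k - 1 : ℕ) : ℝ) / N * Real.exp θ ≤ y := by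
    rw [div_mul_eq_mul_div, div_le_div_iff_of_pos_right hN]
    nlinarith [Real.exp_pos θ]
  have hsum := sum_powerset_card_lt_pow_le (range M) k (by positivity) hθ hty hy
  have hexp : Real.exp (-θ) ^ (M + 1 - k) ≤ Real.exp (-θ * m * ε) := by
    rw [← Real.exp_nat_mul, Real.exp_le_exp, Nat.cast_sub hkm]
    nlinarith
  have hpow : (1 - y) ^ (m * (1 - ε)) ≤ (1 - y) ^ (k - 1) := by
    rw [← Real.rpow_natCast]
    have hy0 : 0 ≤ y :=
      (by positivity : (0 : ℝ) ≤ ((k - 1 : ℕ) : ℝ) / N * Real.exp θ).trans hty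
    exact Real.rpow_le_rpow_of_exponent_ge (by linarith) (by linarith) hk1
  calc _ = (∑ s ∈ (range M).powerset with #s < k,
          N ^ #s * ((k - 1 : ℕ) : ℝ) ^ (#(range M) - #s)) * N⁻¹ ^ #(range M) := by
        rw [card_range, walkCountBound]
        push_cast [Nat.cast_sub hn]
        rfl
    _ = ∑ s ∈ (range M).powerset with #s < k, (((k - 1 : ℕ) : ℝ) / N) ^ (#(range M) - #s) :=
        sum_pow_mul_pow_mul_inv_pow _ _ hN.ne'
    _ ≤ Real.exp (-θ) ^ (#(range M) + 1 - k) / (1 - y) ^ (k - 1) := hsum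
    _ ≤ _ := by
        rw [card_range]
        exact div_le_div₀ (Real.exp_pos _).le hexp (Real.rpow_pos_of_pos (by linarith) _) hpow

end CompleteGraphWalk

open MeasureTheory Filter Set Real Finset ENNReal

open CompleteGraphWalk in
theorem stmt_11_general
    {Ω : Type*} [MeasurableSpace Ω] (P : Measure Ω) [IsProbabilityMeasure P]
    (n : ℕ)
    (S : ℕ → Ω → ℕ)
    (hlaw : ∀ m : ℕ, ∀ f : ℕ → ℕ,
      P {ω | ∀ i ≤ m, S i ω = f i} =
        if f 0 = 0 ∧ (∀ i ≤ m, f i < n) ∧ (∀ i < m, f (i + 1) ≠ f i)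
        then (((n : ℝ≥0∞) - 1)⁻¹) ^ m else 0)
    (R : ℕ → Ω → ℕ)
    (hR : ∀ m ω, R m ω = ((Finset.range m).image (fun i => S i ω)).card)
    (ε θ : ℝ) (hε : ε ∈ Set.Ioo (0 : ℝ) 1) (hθ : 0 < θ)
    (m : ℕ) (hm : (m : ℝ) * (1 - ε) * Real.exp θ < (n : ℝ) - 1) :
    P {ω | (R m ω : ℝ) ≤ (m : ℝ) * (1 - ε)} ≤
      ENNReal.ofReal (Real.exp (-θ * m * ε) /
        (1 - (m : ℝ) * Real.exp θ * (1 - ε) / ((n : ℝ) - 1)) ^ ((m : ℝ) * (1 - ε))) := by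
  rcases m with _ | M
  · simpa using prob_le_one
  set k := ⌊((M + 1 : ℕ) : ℝ) * (1 - ε)⌋₊
  have hm0 : 0 ≤ ((M + 1 : ℕ) : ℝ) * (1 - ε) :=
    mul_nonneg (Nat.cast_nonneg _) (by linarith [hε.2])
  have hevent : {ω | (R (M + 1) ω : ℝ) ≤ ((M + 1 : ℕ) : ℝ) * (1 - ε)} =
      {ω | #(visited (S · ω) (M + 1)) ≤ k} := by
    ext ω
    rw [mem_ofPred_eq, mem_ofPred_eq, hR, Nat.le_floor_iff hm0]
    rfl
  have hn : (1 : ℝ) < n := by nlinarith [Real.exp_pos θ]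
  rw [hevent]
  calc _ ≤ #(shortRangeWalks n M k) * ((n : ℝ≥0∞) - 1)⁻¹ ^ M :=
        measure_card_visited_le P n M k S (hlaw M)
    _ ≤ walkCountBound n M k * ((n : ℝ≥0∞) - 1)⁻¹ ^ M := by
        gcongr
        exact_mod_cast card_shortRangeWalks_le n M k
    _ = ENNReal.ofReal (walkCountBound n M k * ((n : ℝ) - 1)⁻¹ ^ M) := by
        rw [ENNReal.ofReal_mul (Nat.cast_nonneg _), ofReal_natCast,
          ENNReal.ofReal_pow (inv_nonneg.2 (by linarith)), ENNReal.ofReal_inv_of_pos (by linarith),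
          ENNReal.ofReal_sub _ zero_le_one, ofReal_natCast, ENNReal.ofReal_one]
    _ ≤ _ := ENNReal.ofReal_le_ofReal
        (walkCountBound_mul_inv_pow_le M k hε hθ.le (Nat.floor_le hm0) hm)

/-- Range deviation bound for the simple random walk on `C_n`:
`P(R_m ≤ m(1-ε)) ≤ e^{-θmε} / (1 - m e^θ (1-ε)/(n-1))^{m(1-ε)}`. -/
theorem stmt_11
    {Ω : Type*} [MeasurableSpace Ω] (P : Measure Ω) [IsProbabilityMeasure P]
    (n : ℕ) (hn : 2 ≤ n)
    (S : ℕ → Ω → ℕ) (hSm : ∀ i, Measurable (S i))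
    (hlaw : ∀ m : ℕ, ∀ f : ℕ → ℕ,
      P {ω | ∀ i ≤ m, S i ω = f i} =
        if f 0 = 0 ∧ (∀ i ≤ m, f i < n) ∧ (∀ i < m, f (i + 1) ≠ f i)
        then (((n : ℝ≥0∞) - 1)⁻¹) ^ m else 0)
    (R : ℕ → Ω → ℕ)
    (hR : ∀ m ω, R m ω = ((Finset.range m).image (fun i => S i ω)).card)
    (ε θ : ℝ) (hε : ε ∈ Set.Ioo (0 : ℝ) 1) (hθ : 0 < θ)
    (m : ℕ) (hm : (m : ℝ) * (1 - ε) * Real.exp θ < (n : ℝ) - 1) :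
    P {ω | (R m ω : ℝ) ≤ (m : ℝ) * (1 - ε)} ≤
      ENNReal.ofReal (Real.exp (-θ * m * ε) /
        (1 - (m : ℝ) * Real.exp θ * (1 - ε) / ((n : ℝ) - 1)) ^ ((m : ℝ) * (1 - ε))) :=
  stmt_11_general P n S hlaw R hR ε θ hε hθ m hm
end
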